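/- arXiv:2001.07803 — 6 statements merged into one kernel-verified Lean document; each statement's English description precedes it below -/
import Mathlib

section
/- In the PPA second-price auction, for every bidder i, bidding β = VPA_i is a weakly dominant strategy: for every profile of nonnegative bids b = (b_1,…,b_n), u_i^PPA(b with the i-th coordinate replaced by VPA_i) ≥ u_i^PPA(b). (Theorem 1, strategy-proofness part.) -/
namespace PPA0

/-- The set of opponents of bidder `i` is nonempty when there are `n ≥ 2` bidders. -/
lemma erase_nonempty {n : ℕ} (hn : 2 ≤ n) (i : Fin n) :
    ((Finset.univ : Finset (Fin n)).erase i).Nonempty := by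
  apply Finset.card_pos.mp
  rw [Finset.card_erase_of_mem (Finset.mem_univ i), Finset.card_univ, Fintype.card_fin]
  omega

/-- `bmax hn b i` is the highest opponent bid `b_{−i}^max = max_{j ≠ i} b_j`. -/
noncomputable def bmax {n : ℕ} (hn : 2 ≤ n) (b : Fin n → ℝ) (i : Fin n) : ℝ :=
  ((Finset.univ : Finset (Fin n)).erase i).sup' (erase_nonempty hn i) b

/-- `T b i = #{j : b_j = b_i}`, the number of bidders tied with bidder `i`. -/
noncomputable def T {n : ℕ} (b : Fin n → ℝ) (i : Fin n) : ℝ :=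
  (Nat.card {j : Fin n // b j = b i} : ℝ)

/-- Value-per-attention: `VPA_i = [x·γ_i + (1−x)·q_i]·v_i`. -/
def VPA {n : ℕ} (x : ℝ) (γ q v : Fin n → ℝ) (i : Fin n) : ℝ :=
  (x * γ i + (1 - x) * q i) * v i

/-- Bidder `i`'s expected payoff in the PPA second-price auction:
`(p·VPA_i − p·b_{−i}^max)/T(b,i)` if `b_i ≥ b_{−i}^max`, and `0` otherwise. -/
noncomputable def uPPA {n : ℕ} (hn : 2 ≤ n) (p x : ℝ) (γ q v : Fin n → ℝ)
    (b : Fin n → ℝ) (i : Fin n) : ℝ :=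
  if bmax hn b i ≤ b i then (p * VPA x γ q v i - p * bmax hn b i) / T b i else 0

/-! The price `b_{−i}^max` does not depend on `b_i`, so bidder `i`'s payoff is at most the
positive part `(p·VPA_i − p·b_{−i}^max)⁺`: a loss pays `0`, and a win pays the surplus divided
by the tie count `T ≥ 1`. Bidding `VPA_i` attains this bound, since it wins exactly when the
surplus is nonnegative and a strict win is never tied. -/

section

variable {n : ℕ} (hn : 2 ≤ n)

lemma le_bmax (b : Fin n → ℝ) {i j : Fin n} (hji : j ≠ i) : b j ≤ bmax hn b i :=
  Finset.le_sup' b (Finset.mem_erase.mpr ⟨hji, Finset.mem_univ j⟩)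

lemma bmax_update_self (b : Fin n → ℝ) (i : Fin n) (β : ℝ) :
    bmax hn (Function.update b i β) i = bmax hn b i :=
  Finset.sup'_congr _ rfl fun _ hj ↦ Function.update_of_ne (Finset.ne_of_mem_erase hj) _ _

lemma one_le_T (b : Fin n → ℝ) (i : Fin n) : 1 ≤ T b i := by
  have : Nonempty {j : Fin n // b j = b i} := ⟨⟨i, rfl⟩⟩
  unfold T
  exact_mod_cast Nat.card_pos (α := {j : Fin n // b j = b i})

lemma T_eq_one_of_bmax_lt {b : Fin n → ℝ} {i : Fin n} (h : bmax hn b i < b i) : T b i = 1 := by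
  have : Unique {j : Fin n // b j = b i} :=
    { default := ⟨i, rfl⟩
      uniq := fun ⟨j, hj⟩ ↦ Subtype.ext <| by
        by_contra hji
        exact (le_bmax hn b hji).not_gt (hj.symm ▸ h) }
  simp [T]

lemma div_le_posPart {a t : ℝ} (ht : 1 ≤ t) : a / t ≤ a⁺ := by
  rcases le_or_gt 0 a with ha | ha
  · exact (div_le_self ha ht).trans (le_posPart a)
  · exact (div_neg_of_neg_of_pos ha (by linarith)).le.trans (posPart_nonneg a)

variable (p x : ℝ) (γ q v : Fin n → ℝ)

lemma uPPA_le_posPart (b : Fin n → ℝ) (i : Fin n) :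
    uPPA hn p x γ q v b i ≤ (p * VPA x γ q v i - p * bmax hn b i)⁺ := by
  unfold uPPA
  split_ifs
  · exact div_le_posPart (one_le_T b i)
  · exact posPart_nonneg _

lemma uPPA_eq_posPart_of_eq_VPA (hp : 0 ≤ p) {b : Fin n → ℝ} {i : Fin n}
    (hbi : b i = VPA x γ q v i) :
    uPPA hn p x γ q v b i = (p * VPA x γ q v i - p * bmax hn b i)⁺ := by
  unfold uPPA
  rw [hbi]
  rcases lt_trichotomy (bmax hn b i) (VPA x γ q v i) with hlt | heq | hgt
  · have hsurplus : 0 ≤ p * VPA x γ q v i - p * bmax hn b i := by nlinarith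
    rw [if_pos hlt.le, T_eq_one_of_bmax_lt hn (hbi ▸ hlt), div_one, posPart_eq_self.mpr hsurplus]
  · simp [heq]
  · have hsurplus : p * VPA x γ q v i - p * bmax hn b i ≤ 0 := by nlinarith
    rw [if_neg hgt.not_ge, posPart_eq_zero.mpr hsurplus]

end

theorem ppa_strategyproof_general (n : ℕ) (hn : 2 ≤ n) (p x : ℝ)
    (hp : 0 ≤ p ∧ p ≤ 1)
    (γ q v : Fin n → ℝ)
    (i : Fin n) (b : Fin n → ℝ) :
    uPPA hn p x γ q v (Function.update b i (VPA x γ q v i)) i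
      ≥ uPPA hn p x γ q v b i := by
  rw [ge_iff_le, uPPA_eq_posPart_of_eq_VPA hn p x γ q v hp.1 (Function.update_self _ _ _),
    bmax_update_self]
  exact uPPA_le_posPart hn p x γ q v b i

/-- **Theorem 1 (strategy-proofness).** In the PPA second-price auction, bidding
`VPA_i` weakly dominates: for every profile of nonnegative bids `b`,
`u_i^PPA(b with i-th coordinate replaced by VPA_i) ≥ u_i^PPA(b)`. -/
theorem ppa_strategyproof (n : ℕ) (hn : 2 ≤ n) (p x : ℝ)
    (hp : 0 ≤ p ∧ p ≤ 1) (hx : 0 ≤ x ∧ x ≤ 1)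
    (γ q v : Fin n → ℝ)
    (hγ : ∀ i, 0 ≤ γ i ∧ γ i ≤ 1) (hq : ∀ i, 0 ≤ q i ∧ q i ≤ 1)
    (hv : ∀ i, 0 ≤ v i)
    (i : Fin n) (b : Fin n → ℝ) (hb : ∀ j, 0 ≤ b j) :
    uPPA hn p x γ q v (Function.update b i (VPA x γ q v i)) i
      ≥ uPPA hn p x γ q v b i :=
  ppa_strategyproof_general n hn p x hp γ q v i b

end PPA0
end

section
/- In the PPC second-price auction with fully sophisticated bidders and x > 0, for every bidder i, bidding β = VPA_i/x = (γ_i − q_i + q_i/x)·v_i is a weakly dominant strategy: for every profile of nonnegative bids b, u_i^PPC(b with the i-th coordinate replaced by VPA_i/x) ≥ u_i^PPC(b). (Part of Proposition 1.) -/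
/-!
Write `M = b_{−i}^max` and `β = VPA_i / x`, so that a winning bidder `i` earns
`p·x·(β − M)/T`. Whatever bidder `i` bids, the payoff is therefore at most
`max (p·x·(β − M)) 0`, because ties only divide a nonnegative surplus. Bidding `β` attains
this bound: if `β > M` bidder `i` wins alone, if `β = M` the surplus is zero, and if
`β < M` bidder `i` loses and gets `0`.
-/

namespace PPC4

lemma erase_nonempty {n : ℕ} (hn : 2 ≤ n) (i : Fin n) :
    ((Finset.univ : Finset (Fin n)).erase i).Nonempty := by
  apply Finset.card_pos.mp
  rw [Finset.card_erase_of_mem (Finset.mem_univ i), Finset.card_univ, Fintype.card_fin]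
  omega

/-- `bmax hn b i` is the highest opponent bid `b_{−i}^max = max_{j ≠ i} b_j`. -/
noncomputable def bmax {n : ℕ} (hn : 2 ≤ n) (b : Fin n → ℝ) (i : Fin n) : ℝ :=
  ((Finset.univ : Finset (Fin n)).erase i).sup' (erase_nonempty hn i) b

/-- `T b i = #{j : b_j = b_i}`, the number of bidders tied with bidder `i`. -/
noncomputable def T {n : ℕ} (b : Fin n → ℝ) (i : Fin n) : ℝ :=
  (Nat.card {j : Fin n // b j = b i} : ℝ)

/-- Value-per-attention: `VPA_i = [x·γ_i + (1−x)·q_i]·v_i`. -/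
def VPA {n : ℕ} (x : ℝ) (γ q v : Fin n → ℝ) (i : Fin n) : ℝ :=
  (x * γ i + (1 - x) * q i) * v i

noncomputable def uPPC {n : ℕ} (hn : 2 ≤ n) (p x : ℝ) (γ q v : Fin n → ℝ)
    (b : Fin n → ℝ) (i : Fin n) : ℝ :=
  if bmax hn b i ≤ b i then (p * VPA x γ q v i - p * x * bmax hn b i) / T b i else 0

section

variable {n : ℕ} (hn : 2 ≤ n) (b : Fin n → ℝ) (i : Fin n)

lemma le_bmax {j : Fin n} (hj : j ≠ i) : b j ≤ bmax hn b i :=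
  Finset.le_sup' b (Finset.mem_erase.mpr ⟨hj, Finset.mem_univ j⟩)

lemma bmax_update_self (c : ℝ) : bmax hn (Function.update b i c) i = bmax hn b i :=
  Finset.sup'_congr _ rfl fun _ hj => Function.update_of_ne (Finset.ne_of_mem_erase hj) _ _

lemma one_le_T : 1 ≤ T b i := by
  have : Nonempty {j : Fin n // b j = b i} := ⟨⟨i, rfl⟩⟩
  exact Nat.one_le_cast.mpr Nat.card_pos

lemma T_eq_one_of_bmax_lt (h : bmax hn b i < b i) : T b i = 1 := by
  have eq_self : ∀ j, b j = b i → j = i := fun j hj => by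
    by_contra hji
    exact (le_bmax hn b i hji).not_gt (hj ▸ h)
  have : Nat.card {j : Fin n // b j = b i} = 1 :=
    Nat.card_eq_one_iff_unique.mpr
      ⟨⟨fun j k => Subtype.ext ((eq_self j j.2).trans (eq_self k k.2).symm)⟩, ⟨⟨i, rfl⟩⟩⟩
  rw [T, this, Nat.cast_one]

variable (p x : ℝ) (γ q v : Fin n → ℝ)

lemma uPPC_le_max : uPPC hn p x γ q v b i ≤ max (p * VPA x γ q v i - p * x * bmax hn b i) 0 := by
  unfold uPPC
  split_ifs
  · calc (p * VPA x γ q v i - p * x * bmax hn b i) / T b i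
        ≤ max (p * VPA x γ q v i - p * x * bmax hn b i) 0 / T b i :=
          div_le_div_of_nonneg_right (le_max_left _ _) (zero_le_one.trans (one_le_T b i))
      _ ≤ max (p * VPA x γ q v i - p * x * bmax hn b i) 0 :=
          div_le_self (le_max_right _ _) (one_le_T b i)
  · exact le_max_right _ _

lemma uPPC_update_vpa_div (hp : 0 ≤ p) (hx : 0 < x) :
    uPPC hn p x γ q v (Function.update b i (VPA x γ q v i / x)) i
      = max (p * VPA x γ q v i - p * x * bmax hn b i) 0 := by
  set β := VPA x γ q v i / x
  set M := bmax hn b i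
  have surplus : p * VPA x γ q v i - p * x * M = p * x * (β - M) := by
    simp only [β]; field_simp
  have hpx : 0 ≤ p * x := mul_nonneg hp hx.le
  unfold uPPC
  rw [bmax_update_self, Function.update_self, surplus]
  rcases lt_trichotomy M β with hlt | heq | hgt
  · have hT : T (Function.update b i β) i = 1 := by
      apply T_eq_one_of_bmax_lt hn
      rwa [bmax_update_self, Function.update_self]
    rw [if_pos hlt.le, hT, div_one, max_eq_left (mul_nonneg hpx (sub_nonneg.mpr hlt.le))]
  · simp [heq]
  · rw [if_neg hgt.not_ge, max_eq_right (mul_nonpos_of_nonneg_of_nonpos hpx (by linarith))]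

end

theorem ppc_dominant_general (n : ℕ) (hn : 2 ≤ n) (p x : ℝ)
    (hp : 0 ≤ p ∧ p ≤ 1) (hx : 0 < x ∧ x ≤ 1)
    (γ q v : Fin n → ℝ)
    (i : Fin n) (b : Fin n → ℝ) :
    uPPC hn p x γ q v (Function.update b i (VPA x γ q v i / x)) i
      ≥ uPPC hn p x γ q v b i := by
  rw [ge_iff_le, uPPC_update_vpa_div hn b i p x γ q v hp.1 hx.1]
  exact uPPC_le_max hn b i p x γ q v

/-- **Proposition 1 (PPC dominant strategy).** In the PPC second-price auction
with fully sophisticated bidders and `x > 0`, bidding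
`VPA_i/x = (γ_i − q_i + q_i/x)·v_i` weakly dominates: for every profile of
nonnegative bids `b`,
`u_i^PPC(b with i-th coordinate replaced by VPA_i/x) ≥ u_i^PPC(b)`. -/
theorem ppc_dominant (n : ℕ) (hn : 2 ≤ n) (p x : ℝ)
    (hp : 0 ≤ p ∧ p ≤ 1) (hx : 0 < x ∧ x ≤ 1)
    (γ q v : Fin n → ℝ)
    (hγ : ∀ i, 0 ≤ γ i ∧ γ i ≤ 1) (hq : ∀ i, 0 ≤ q i ∧ q i ≤ 1)
    (hv : ∀ i, 0 ≤ v i)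
    (i : Fin n) (b : Fin n → ℝ) (hb : ∀ j, 0 ≤ b j) :
    uPPC hn p x γ q v (Function.update b i (VPA x γ q v i / x)) i
      ≥ uPPC hn p x γ q v b i :=
  ppc_dominant_general n hn p x hp hx γ q v i b

end PPC4
end

section
/- Assume x > 0 and that there is a unique bidder i* attaining max_{j ∈ I} VPA_j, and let VPA_(2) := max_{j ≠ i*} VPA_j. In the dominant-strategy equilibria b_i^PPA = VPA_i, b_i^PPI = p·VPA_i, and b_i^PPC = VPA_i/x, every bidder receives the same expected payoff across the three formats: bidder i* receives p·(VPA_{i*} − VPA_(2)) in each of the PPA, PPI and PPC auctions, and every bidder j ≠ i* receives 0 in each format. (Payoff-equivalence part of Proposition 1.) -/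
/-!
Under truthful bidding (up to the positive rescaling each format prescribes) the bidder with the
highest value per attention is the strict highest bidder, hence wins alone (`T = 1`) and pays the
rescaled second-highest value; every other bidder is outbid by `i*` and gets nothing. The rescaling
of the bids is exactly undone by the price factor of each format (`p`, `1`, `p·x`), so the winner's
surplus is `p·(VPA_{i*} − VPA_(2))` in all three auctions.
-/

namespace PPA6

lemma erase_nonempty {n : ℕ} (hn : 2 ≤ n) (i : Fin n) :
    ((Finset.univ : Finset (Fin n)).erase i).Nonempty := by
  apply Finset.card_pos.mp
  rw [Finset.card_erase_of_mem (Finset.mem_univ i), Finset.card_univ, Fintype.card_fin]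
  omega

/-- `bmax hn b i = max_{j ≠ i} b_j`. -/
noncomputable def bmax {n : ℕ} (hn : 2 ≤ n) (b : Fin n → ℝ) (i : Fin n) : ℝ :=
  ((Finset.univ : Finset (Fin n)).erase i).sup' (erase_nonempty hn i) b

/-- `T b i = #{j : b_j = b_i}`. -/
noncomputable def T {n : ℕ} (b : Fin n → ℝ) (i : Fin n) : ℝ :=
  (Nat.card {j : Fin n // b j = b i} : ℝ)

/-- Value-per-attention: `VPA_i = [x·γ_i + (1−x)·q_i]·v_i`. -/
def VPA {n : ℕ} (x : ℝ) (γ q v : Fin n → ℝ) (i : Fin n) : ℝ :=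
  (x * γ i + (1 - x) * q i) * v i

/-- PPA payoff: `(p·VPA_i − p·b_{−i}^max)/T(b,i)` if `b_i ≥ b_{−i}^max`, else `0`. -/
noncomputable def uPPA {n : ℕ} (hn : 2 ≤ n) (p x : ℝ) (γ q v : Fin n → ℝ)
    (b : Fin n → ℝ) (i : Fin n) : ℝ :=
  if bmax hn b i ≤ b i then (p * VPA x γ q v i - p * bmax hn b i) / T b i else 0

/-- PPI payoff: `(p·VPA_i − b_{−i}^max)/T(b,i)` if `b_i ≥ b_{−i}^max`, else `0`. -/
noncomputable def uPPI {n : ℕ} (hn : 2 ≤ n) (p x : ℝ) (γ q v : Fin n → ℝ)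
    (b : Fin n → ℝ) (i : Fin n) : ℝ :=
  if bmax hn b i ≤ b i then (p * VPA x γ q v i - bmax hn b i) / T b i else 0

/-- PPC payoff: `(p·VPA_i − p·x·b_{−i}^max)/T(b,i)` if `b_i ≥ b_{−i}^max`, else `0`. -/
noncomputable def uPPC {n : ℕ} (hn : 2 ≤ n) (p x : ℝ) (γ q v : Fin n → ℝ)
    (b : Fin n → ℝ) (i : Fin n) : ℝ :=
  if bmax hn b i ≤ b i then (p * VPA x γ q v i - p * x * bmax hn b i) / T b i else 0

section SecondPrice

variable {n : ℕ} (hn : 2 ≤ n) {b : Fin n → ℝ} {i : Fin n}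

lemma bmax_const_mul {c : ℝ} (hc : 0 ≤ c) (b : Fin n → ℝ) (i : Fin n) :
    bmax hn (fun j => c * b j) i = c * bmax hn b i :=
  (Finset.mul₀_sup' hc b _ _).symm

lemma bmax_div_const {c : ℝ} (hc : 0 ≤ c) (b : Fin n → ℝ) (i : Fin n) :
    bmax hn (fun j => b j / c) i = bmax hn b i / c :=
  (Finset.sup'_div₀ hc b _ _).symm

lemma bmax_lt_of_forall_lt (h : ∀ j, j ≠ i → b j < b i) : bmax hn b i < b i :=
  Finset.sup'_lt_iff _ |>.mpr fun j hj => h j (Finset.ne_of_mem_erase hj)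

lemma lt_bmax_of_lt {j : Fin n} (hji : j ≠ i) (h : b j < b i) : b j < bmax hn b j :=
  h.trans_le <| Finset.le_sup' b <| Finset.mem_erase.mpr ⟨hji.symm, Finset.mem_univ i⟩

omit hn in
lemma T_eq_one_of_forall_lt (h : ∀ j, j ≠ i → b j < b i) : T b i = 1 := by
  have : Unique {j : Fin n // b j = b i} :=
    { default := ⟨i, rfl⟩
      uniq := fun ⟨j, hj⟩ => Subtype.ext <| by_contra fun hji => (h j hji).ne hj }
  simp [T]

lemma ite_winner (h : ∀ j, j ≠ i → b j < b i) (a : ℝ) :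
    (if bmax hn b i ≤ b i then a / T b i else 0) = a := by
  rw [if_pos (bmax_lt_of_forall_lt hn h).le, T_eq_one_of_forall_lt h, div_one]

lemma ite_loser {j : Fin n} (hji : j ≠ i) (h : b j < b i) (a : ℝ) :
    (if bmax hn b j ≤ b j then a else 0) = 0 :=
  if_neg (lt_bmax_of_lt hn hji h).not_ge

end SecondPrice

section Truthful

variable {n : ℕ} (hn : 2 ≤ n) (γ q v : Fin n → ℝ) {i : Fin n}

lemma uPPA_truthful (p x : ℝ) (h : ∀ j, j ≠ i → VPA x γ q v j < VPA x γ q v i) :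
    uPPA hn p x γ q v (fun j => VPA x γ q v j) i
        = p * (VPA x γ q v i - bmax hn (VPA x γ q v) i) ∧
      ∀ j, j ≠ i → uPPA hn p x γ q v (fun j' => VPA x γ q v j') j = 0 := by
  refine ⟨?_, fun j hj => ite_loser hn hj (h j hj) _⟩
  rw [uPPA, ite_winner hn h]
  ring

lemma uPPI_truthful (x : ℝ) {p : ℝ} (hp : 0 ≤ p) (h : ∀ j, j ≠ i → VPA x γ q v j < VPA x γ q v i) :
    uPPI hn p x γ q v (fun j => p * VPA x γ q v j) i
        = p * (VPA x γ q v i - bmax hn (VPA x γ q v) i) ∧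
      ∀ j, j ≠ i → uPPI hn p x γ q v (fun j' => p * VPA x γ q v j') j = 0 := by
  rcases hp.eq_or_lt with rfl | hp0
  · -- all bids are `0` and every bidder ties, but each pays `0` for a value of `0`
    have hzero : ∀ k, uPPI hn 0 x γ q v (fun j => 0 * VPA x γ q v j) k = 0 := fun k => by
      rw [uPPI, bmax_const_mul hn le_rfl]
      simp
    exact ⟨by rw [hzero, zero_mul], fun j _ => hzero j⟩
  have hI : ∀ j, j ≠ i → p * VPA x γ q v j < p * VPA x γ q v i :=
    fun j hj => mul_lt_mul_of_pos_left (h j hj) hp0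
  refine ⟨?_, fun j hj => ite_loser hn hj (hI j hj) _⟩
  rw [uPPI, ite_winner hn hI, bmax_const_mul hn hp]
  ring

lemma uPPC_truthful (p : ℝ) {x : ℝ} (hx : 0 < x) (h : ∀ j, j ≠ i → VPA x γ q v j < VPA x γ q v i) :
    uPPC hn p x γ q v (fun j => VPA x γ q v j / x) i
        = p * (VPA x γ q v i - bmax hn (VPA x γ q v) i) ∧
      ∀ j, j ≠ i → uPPC hn p x γ q v (fun j' => VPA x γ q v j' / x) j = 0 := by
  have hC : ∀ j, j ≠ i → VPA x γ q v j / x < VPA x γ q v i / x :=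
    fun j hj => div_lt_div_of_pos_right (h j hj) hx
  refine ⟨?_, fun j hj => ite_loser hn hj (hC j hj) _⟩
  rw [uPPC, ite_winner hn hC, bmax_div_const hn hx.le]
  field_simp

end Truthful

theorem payoff_equivalence_general (n : ℕ) (hn : 2 ≤ n) (p x : ℝ)
    (hp : 0 ≤ p ∧ p ≤ 1) (hx : 0 < x ∧ x ≤ 1)
    (γ q v : Fin n → ℝ)
    (istar : Fin n)
    (huniq : ∀ j, j ≠ istar → VPA x γ q v j < VPA x γ q v istar) :
    uPPA hn p x γ q v (fun j => VPA x γ q v j) istar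
      = p * (VPA x γ q v istar - bmax hn (VPA x γ q v) istar) ∧
    uPPI hn p x γ q v (fun j => p * VPA x γ q v j) istar
      = p * (VPA x γ q v istar - bmax hn (VPA x γ q v) istar) ∧
    uPPC hn p x γ q v (fun j => VPA x γ q v j / x) istar
      = p * (VPA x γ q v istar - bmax hn (VPA x γ q v) istar) ∧
    (∀ j, j ≠ istar →
      uPPA hn p x γ q v (fun j' => VPA x γ q v j') j = 0 ∧
      uPPI hn p x γ q v (fun j' => p * VPA x γ q v j') j = 0 ∧
      uPPC hn p x γ q v (fun j' => VPA x γ q v j' / x) j = 0) := by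
  obtain ⟨winA, loseA⟩ := uPPA_truthful hn γ q v p x huniq
  obtain ⟨winI, loseI⟩ := uPPI_truthful hn γ q v x hp.1 huniq
  obtain ⟨winC, loseC⟩ := uPPC_truthful hn γ q v p hx.1 huniq
  exact ⟨winA, winI, winC, fun j hj => ⟨loseA j hj, loseI j hj, loseC j hj⟩⟩

/-- **Proposition 1 (payoff equivalence).** Assume `x > 0` and let `i*` be the
unique bidder attaining `max_j VPA_j`, with `VPA_(2) = max_{j ≠ i*} VPA_j`.
In the dominant-strategy equilibria `b_i^PPA = VPA_i`, `b_i^PPI = p·VPA_i` and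
`b_i^PPC = VPA_i/x`, every bidder receives the same expected payoff in the
three formats: `i*` receives `p·(VPA_{i*} − VPA_(2))` in each of the PPA, PPI
and PPC auctions, and every bidder `j ≠ i*` receives `0` in each format. -/
theorem payoff_equivalence (n : ℕ) (hn : 2 ≤ n) (p x : ℝ)
    (hp : 0 ≤ p ∧ p ≤ 1) (hx : 0 < x ∧ x ≤ 1)
    (γ q v : Fin n → ℝ)
    (hγ : ∀ i, 0 ≤ γ i ∧ γ i ≤ 1) (hq : ∀ i, 0 ≤ q i ∧ q i ≤ 1)
    (hv : ∀ i, 0 ≤ v i)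
    (istar : Fin n)
    (hmax : ∀ j, VPA x γ q v j ≤ VPA x γ q v istar)
    (huniq : ∀ j, j ≠ istar → VPA x γ q v j < VPA x γ q v istar) :
    uPPA hn p x γ q v (fun j => VPA x γ q v j) istar
      = p * (VPA x γ q v istar - bmax hn (VPA x γ q v) istar) ∧
    uPPI hn p x γ q v (fun j => p * VPA x γ q v j) istar
      = p * (VPA x γ q v istar - bmax hn (VPA x γ q v) istar) ∧
    uPPC hn p x γ q v (fun j => VPA x γ q v j / x) istar
      = p * (VPA x γ q v istar - bmax hn (VPA x γ q v) istar) ∧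
    (∀ j, j ≠ istar →
      uPPA hn p x γ q v (fun j' => VPA x γ q v j') j = 0 ∧
      uPPI hn p x γ q v (fun j' => p * VPA x γ q v j') j = 0 ∧
      uPPC hn p x γ q v (fun j' => VPA x γ q v j' / x) j = 0) :=
  payoff_equivalence_general n hn p x hp hx γ q v istar huniq

end PPA6
end

section
/- With bidder-specific attention probabilities p_i ∈ [0,1] and x > 0, for every bidder i: (a) bidding β = p_i·VPA_i is a weakly dominant strategy under the PPI payoff u_i^PPI; (b) bidding β = VPA_i/x is a weakly dominant strategy under the PPC payoff u_i^PPC; and (c) bidding β = VPA_i is a weakly dominant strategy under the PPA payoff u_i^PPA. (Dominant strategies asserted in the proof of Proposition 2.) -/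
namespace PPA7

lemma erase_nonempty {n : ℕ} (hn : 2 ≤ n) (i : Fin n) :
    ((Finset.univ : Finset (Fin n)).erase i).Nonempty := by
  apply Finset.card_pos.mp
  rw [Finset.card_erase_of_mem (Finset.mem_univ i), Finset.card_univ, Fintype.card_fin]
  omega

/-- `bmax hn b i = max_{j ≠ i} b_j`. -/
noncomputable def bmax {n : ℕ} (hn : 2 ≤ n) (b : Fin n → ℝ) (i : Fin n) : ℝ :=
  ((Finset.univ : Finset (Fin n)).erase i).sup' (erase_nonempty hn i) b

/-- `T b i = #{j : b_j = b_i}`. -/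
noncomputable def T {n : ℕ} (b : Fin n → ℝ) (i : Fin n) : ℝ :=
  (Nat.card {j : Fin n // b j = b i} : ℝ)

/-- Value-per-attention: `VPA_i = [x·γ_i + (1−x)·q_i]·v_i`. -/
def VPA {n : ℕ} (x : ℝ) (γ q v : Fin n → ℝ) (i : Fin n) : ℝ :=
  (x * γ i + (1 - x) * q i) * v i

/-- PPA payoff with bidder-specific attention probabilities:
`(p_i·VPA_i − p_i·b_{−i}^max)/T(b,i)` if `b_i ≥ b_{−i}^max`, else `0`. -/
noncomputable def uPPA {n : ℕ} (hn : 2 ≤ n) (p : Fin n → ℝ) (x : ℝ)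
    (γ q v : Fin n → ℝ) (b : Fin n → ℝ) (i : Fin n) : ℝ :=
  if bmax hn b i ≤ b i then (p i * VPA x γ q v i - p i * bmax hn b i) / T b i else 0

/-- PPI payoff with bidder-specific attention probabilities:
`(p_i·VPA_i − b_{−i}^max)/T(b,i)` if `b_i ≥ b_{−i}^max`, else `0`. -/
noncomputable def uPPI {n : ℕ} (hn : 2 ≤ n) (p : Fin n → ℝ) (x : ℝ)
    (γ q v : Fin n → ℝ) (b : Fin n → ℝ) (i : Fin n) : ℝ :=
  if bmax hn b i ≤ b i then (p i * VPA x γ q v i - bmax hn b i) / T b i else 0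

/-- PPC payoff with bidder-specific attention probabilities:
`(p_i·VPA_i − p_i·x·b_{−i}^max)/T(b,i)` if `b_i ≥ b_{−i}^max`, else `0`. -/
noncomputable def uPPC {n : ℕ} (hn : 2 ≤ n) (p : Fin n → ℝ) (x : ℝ)
    (γ q v : Fin n → ℝ) (b : Fin n → ℝ) (i : Fin n) : ℝ :=
  if bmax hn b i ≤ b i then (p i * VPA x γ q v i - p i * x * bmax hn b i) / T b i else 0

/-! All three payoffs are instances of a second-price payoff in which a winner with value `c`
pays `k ≥ 0` per unit of the highest competing bid `M` (`k = 1`, `p_i x`, `p_i` for PPI, PPC, PPA,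
and `c = p_i VPA_i` throughout). The truthful bid `β = c / k` earns exactly `max 0 (k (β - M))`:
it wins precisely when winning is profitable, and then strictly above `M`, hence alone.
No bid earns more, since a tie only divides the surplus `k (β - M)`. -/

noncomputable def secondPricePayoff {n : ℕ} (hn : 2 ≤ n) (k c : ℝ) (b : Fin n → ℝ)
    (i : Fin n) : ℝ :=
  if bmax hn b i ≤ b i then (c - k * bmax hn b i) / T b i else 0

open Function

section

variable {n : ℕ} (hn : 2 ≤ n) (b : Fin n → ℝ) (i : Fin n)

lemma bmax_update_self (β : ℝ) : bmax hn (update b i β) i = bmax hn b i :=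
  Finset.sup'_congr _ rfl fun _ hj => update_of_ne (Finset.ne_of_mem_erase hj) _ _

lemma le_bmax {j : Fin n} (h : j ≠ i) : b j ≤ bmax hn b i :=
  Finset.le_sup' b (Finset.mem_erase.mpr ⟨h, Finset.mem_univ j⟩)

lemma one_le_T : 1 ≤ T b i := by
  have : Nonempty {j : Fin n // b j = b i} := ⟨⟨i, rfl⟩⟩
  exact Nat.one_le_cast.mpr Nat.card_pos

lemma T_update_self_of_bmax_lt {β : ℝ} (h : bmax hn b i < β) : T (update b i β) i = 1 := by
  have hwinner : ∀ j, update b i β j = β ↔ j = i := by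
    refine fun j => ⟨fun hj => ?_, fun hj => by rw [hj, update_self]⟩
    by_contra hji
    rw [update_of_ne hji] at hj
    exact (le_bmax hn b i hji).not_gt (hj ▸ h)
  simp [T, hwinner]

lemma secondPricePayoff_le (k β : ℝ) :
    secondPricePayoff hn k (k * β) b i ≤ max 0 (k * (β - bmax hn b i)) := by
  unfold secondPricePayoff
  split_ifs
  · have hT := one_le_T b i
    rw [← mul_sub]
    calc k * (β - bmax hn b i) / T b i ≤ max 0 (k * (β - bmax hn b i)) / T b i := by
          gcongr; exact le_max_right _ _
      _ ≤ max 0 (k * (β - bmax hn b i)) := div_le_self (le_max_left _ _) hT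
  · exact le_max_left _ _

lemma secondPricePayoff_update_self {k : ℝ} (hk : 0 ≤ k) (β : ℝ) :
    secondPricePayoff hn k (k * β) (update b i β) i = max 0 (k * (β - bmax hn b i)) := by
  unfold secondPricePayoff
  rw [bmax_update_self, update_self]
  rcases lt_trichotomy (bmax hn b i) β with hlt | heq | hgt
  · rw [if_pos hlt.le, T_update_self_of_bmax_lt hn b i hlt, div_one, ← mul_sub,
      max_eq_right (mul_nonneg hk (sub_pos.mpr hlt).le)]
  · simp [heq]
  · rw [if_neg hgt.not_ge, max_eq_left (mul_nonpos_of_nonneg_of_nonpos hk (sub_neg.mpr hgt).le)]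

theorem secondPricePayoff_le_update_self {k : ℝ} (hk : 0 ≤ k) (β : ℝ) :
    secondPricePayoff hn k (k * β) b i ≤ secondPricePayoff hn k (k * β) (update b i β) i :=
  (secondPricePayoff_le hn b i k β).trans_eq (secondPricePayoff_update_self hn b i hk β).symm

end

section

variable {n : ℕ} (hn : 2 ≤ n) (p : Fin n → ℝ) (x : ℝ) (γ q v b : Fin n → ℝ) (i : Fin n)

lemma uPPI_eq_secondPricePayoff :
    uPPI hn p x γ q v b i = secondPricePayoff hn 1 (p i * VPA x γ q v i) b i := by
  simp only [uPPI, secondPricePayoff, one_mul]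

lemma uPPC_eq_secondPricePayoff :
    uPPC hn p x γ q v b i = secondPricePayoff hn (p i * x) (p i * VPA x γ q v i) b i := rfl

lemma uPPA_eq_secondPricePayoff :
    uPPA hn p x γ q v b i = secondPricePayoff hn (p i) (p i * VPA x γ q v i) b i := rfl

end

theorem bidder_specific_dominant_general (n : ℕ) (hn : 2 ≤ n)
    (p : Fin n → ℝ) (hp : ∀ i, 0 ≤ p i ∧ p i ≤ 1)
    (x : ℝ) (hx : 0 < x ∧ x ≤ 1)
    (γ q v : Fin n → ℝ)
    (i : Fin n) :
    (∀ b : Fin n → ℝ, (∀ j, 0 ≤ b j) →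
      uPPI hn p x γ q v (Function.update b i (p i * VPA x γ q v i)) i
        ≥ uPPI hn p x γ q v b i) ∧
    (∀ b : Fin n → ℝ, (∀ j, 0 ≤ b j) →
      uPPC hn p x γ q v (Function.update b i (VPA x γ q v i / x)) i
        ≥ uPPC hn p x γ q v b i) ∧
    (∀ b : Fin n → ℝ, (∀ j, 0 ≤ b j) →
      uPPA hn p x γ q v (Function.update b i (VPA x γ q v i)) i
        ≥ uPPA hn p x γ q v b i) := by
  have hPPC_value : p i * VPA x γ q v i = p i * x * (VPA x γ q v i / x) := by
    field_simp [hx.1.ne']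
  refine ⟨fun b _ => ?_, fun b _ => ?_, fun b _ => ?_⟩
  · simp only [uPPI_eq_secondPricePayoff]
    simpa only [one_mul] using secondPricePayoff_le_update_self hn b i zero_le_one _
  · simp only [uPPC_eq_secondPricePayoff, hPPC_value]
    exact secondPricePayoff_le_update_self hn b i (mul_nonneg (hp i).1 hx.1.le) _
  · simp only [uPPA_eq_secondPricePayoff]
    exact secondPricePayoff_le_update_self hn b i (hp i).1 _

/-- **Proposition 2 (dominant strategies).** With bidder-specific attention
probabilities `p_i ∈ [0,1]` and `x > 0`, for every bidder `i`:
(a) bidding `p_i·VPA_i` is weakly dominant under the PPI payoff;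
(b) bidding `VPA_i/x` is weakly dominant under the PPC payoff;
(c) bidding `VPA_i` is weakly dominant under the PPA payoff. -/
theorem bidder_specific_dominant (n : ℕ) (hn : 2 ≤ n)
    (p : Fin n → ℝ) (hp : ∀ i, 0 ≤ p i ∧ p i ≤ 1)
    (x : ℝ) (hx : 0 < x ∧ x ≤ 1)
    (γ q v : Fin n → ℝ)
    (hγ : ∀ i, 0 ≤ γ i ∧ γ i ≤ 1) (hq : ∀ i, 0 ≤ q i ∧ q i ≤ 1)
    (hv : ∀ i, 0 ≤ v i)
    (i : Fin n) :
    (∀ b : Fin n → ℝ, (∀ j, 0 ≤ b j) →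
      uPPI hn p x γ q v (Function.update b i (p i * VPA x γ q v i)) i
        ≥ uPPI hn p x γ q v b i) ∧
    (∀ b : Fin n → ℝ, (∀ j, 0 ≤ b j) →
      uPPC hn p x γ q v (Function.update b i (VPA x γ q v i / x)) i
        ≥ uPPC hn p x γ q v b i) ∧
    (∀ b : Fin n → ℝ, (∀ j, 0 ≤ b j) →
      uPPA hn p x γ q v (Function.update b i (VPA x γ q v i)) i
        ≥ uPPA hn p x γ q v b i) :=
  bidder_specific_dominant_general n hn p hp x hx γ q v i

end PPA7
end

section
/- With bidder-specific attention probabilities p_i and x > 0, suppose there is a unique bidder i* attaining max_{j ∈ I} VPA_j and a unique bidder ĩ attaining max_{j ∈ I} VPI_j where VPI_j := p_j·VPA_j. In the dominant-strategy equilibria b_i^PPA = VPA_i, b_i^PPC = VPA_i/x, and b_i^PPI = p_i·VPA_i, the expected revenues are R^PPA = R^PPC = p_{i*}·(max_{j ≠ i*} VPA_j) and R^PPI = max_{j ≠ ĩ} (p_j·VPA_j). (Proposition 2.) -/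
/-!
Uniqueness of the maximiser forces every highest bidder to be `i*` (PPA, PPC) or `ĩ` (PPI).
The PPC bids are the PPA bids scaled by `1/x`, so the second-highest PPC bid is the PPA one
scaled by `1/x`, which the click probability `x` cancels.
-/

namespace PPA8

lemma erase_nonempty {n : ℕ} (hn : 2 ≤ n) (i : Fin n) :
    ((Finset.univ : Finset (Fin n)).erase i).Nonempty := by
  apply Finset.card_pos.mp
  rw [Finset.card_erase_of_mem (Finset.mem_univ i), Finset.card_univ, Fintype.card_fin]
  omega

/-- `bmax hn b i = max_{j ≠ i} b_j` : for a winner `w`, this is the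
second-highest bid of the profile `b`. -/
noncomputable def bmax {n : ℕ} (hn : 2 ≤ n) (b : Fin n → ℝ) (i : Fin n) : ℝ :=
  ((Finset.univ : Finset (Fin n)).erase i).sup' (erase_nonempty hn i) b

/-- Value-per-attention: `VPA_i = [x·γ_i + (1−x)·q_i]·v_i`. -/
def VPA {n : ℕ} (x : ℝ) (γ q v : Fin n → ℝ) (i : Fin n) : ℝ :=
  (x * γ i + (1 - x) * q i) * v i

lemma eq_of_forall_le_of_forall_ne_lt {ι α : Type*} [LinearOrder α] {f : ι → α} {i w : ι}
    (hi : ∀ j, j ≠ i → f j < f i) (hw : ∀ j, f j ≤ f w) : w = i := by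
  by_contra hwi
  exact (hi w hwi).not_ge (hw i)

lemma bmax_div {n : ℕ} (hn : 2 ≤ n) (b : Fin n → ℝ) {x : ℝ} (hx : 0 < x) (i : Fin n) :
    bmax hn (fun j => b j / x) i = bmax hn b i / x :=
  (Finset.apply_sup'_eq_sup'_comp _ (· / x) fun _ _ => (max_div_div_right hx.le _ _).symm).symm

theorem bidder_specific_revenues_general (n : ℕ) (hn : 2 ≤ n)
    (p : Fin n → ℝ)
    (x : ℝ) (hx : 0 < x ∧ x ≤ 1)
    (γ q v : Fin n → ℝ)
    (istar itil : Fin n)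
    (hstaruniq : ∀ j, j ≠ istar → VPA x γ q v j < VPA x γ q v istar)
    (htiluniq : ∀ j, j ≠ itil → p j * VPA x γ q v j < p itil * VPA x γ q v itil) :
    -- R^PPA = p_{i*}·(max_{j ≠ i*} VPA_j)
    (∀ w, (∀ j, VPA x γ q v j ≤ VPA x γ q v w) →
      p w * bmax hn (VPA x γ q v) w
        = p istar * bmax hn (VPA x γ q v) istar) ∧
    -- R^PPC = p_{i*}·(max_{j ≠ i*} VPA_j)
    (∀ w, (∀ j, VPA x γ q v j / x ≤ VPA x γ q v w / x) →
      p w * x * bmax hn (fun j => VPA x γ q v j / x) w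
        = p istar * bmax hn (VPA x γ q v) istar) ∧
    -- R^PPI = max_{j ≠ ĩ} (p_j·VPA_j)
    (∀ w, (∀ j, p j * VPA x γ q v j ≤ p w * VPA x γ q v w) →
      bmax hn (fun j => p j * VPA x γ q v j) w
        = bmax hn (fun j => p j * VPA x γ q v j) itil) := by
  refine ⟨fun w hw => ?_, fun w hw => ?_, fun w hw => ?_⟩
  · rw [eq_of_forall_le_of_forall_ne_lt hstaruniq hw]
  · have hw' : ∀ j, VPA x γ q v j ≤ VPA x γ q v w := fun j =>
      (div_le_div_iff_of_pos_right hx.1).mp (hw j)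
    rw [eq_of_forall_le_of_forall_ne_lt hstaruniq hw', bmax_div hn _ hx.1, mul_assoc,
      mul_div_cancel₀ _ hx.1.ne']
  · rw [eq_of_forall_le_of_forall_ne_lt htiluniq hw]

/-- **Proposition 2.** With bidder-specific attention probabilities `p_i` and
`x > 0`, suppose `i*` is the unique bidder attaining `max_j VPA_j` and `ĩ` the
unique bidder attaining `max_j VPI_j` where `VPI_j = p_j·VPA_j`. In the
dominant-strategy equilibria `b^PPA = VPA`, `b^PPC = VPA/x`, `b^PPI = p·VPA`,
the expected revenue (winning probability times the second-highest bid, for any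
highest bidder `w` of the respective profile) satisfies
`R^PPA = R^PPC = p_{i*}·(max_{j≠i*} VPA_j)` and `R^PPI = max_{j≠ĩ}(p_j·VPA_j)`. -/
theorem bidder_specific_revenues (n : ℕ) (hn : 2 ≤ n)
    (p : Fin n → ℝ) (hp : ∀ i, 0 ≤ p i ∧ p i ≤ 1)
    (x : ℝ) (hx : 0 < x ∧ x ≤ 1)
    (γ q v : Fin n → ℝ)
    (hγ : ∀ i, 0 ≤ γ i ∧ γ i ≤ 1) (hq : ∀ i, 0 ≤ q i ∧ q i ≤ 1)
    (hv : ∀ i, 0 ≤ v i)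
    (istar itil : Fin n)
    (hstarmax : ∀ j, VPA x γ q v j ≤ VPA x γ q v istar)
    (hstaruniq : ∀ j, j ≠ istar → VPA x γ q v j < VPA x γ q v istar)
    (htilmax : ∀ j, p j * VPA x γ q v j ≤ p itil * VPA x γ q v itil)
    (htiluniq : ∀ j, j ≠ itil → p j * VPA x γ q v j < p itil * VPA x γ q v itil) :
    -- R^PPA = p_{i*}·(max_{j ≠ i*} VPA_j)
    (∀ w, (∀ j, VPA x γ q v j ≤ VPA x γ q v w) →
      p w * bmax hn (VPA x γ q v) w
        = p istar * bmax hn (VPA x γ q v) istar) ∧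
    -- R^PPC = p_{i*}·(max_{j ≠ i*} VPA_j)
    (∀ w, (∀ j, VPA x γ q v j / x ≤ VPA x γ q v w / x) →
      p w * x * bmax hn (fun j => VPA x γ q v j / x) w
        = p istar * bmax hn (VPA x γ q v) istar) ∧
    -- R^PPI = max_{j ≠ ĩ} (p_j·VPA_j)
    (∀ w, (∀ j, p j * VPA x γ q v j ≤ p w * VPA x γ q v w) →
      bmax hn (fun j => p j * VPA x γ q v j) w
        = bmax hn (fun j => p j * VPA x γ q v j) itil) :=
  bidder_specific_revenues_general n hn p x hx γ q v istar itil hstaruniq htiluniq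

end PPA8
end

section
/- With framed bidders, let i₁ be the unique bidder attaining max_j VPA_j with second-highest value VPA_(2) := max_{j ≠ i₁} VPA_j, let ī₁ be the unique bidder attaining max_j VPC_j, and let ī₂ attain max_{j ≠ ī₁} VPC_j, so that R̂^PPA = p_{i₁}·VPA_(2) and R̂^PPC = p_{ī₁}·x·VPC_{ī₂}. If p_{i₁} ≥ p_{ī₁} > 0, x < 1, q_{ī₂} > 0, v_{ī₂} > 0, and VPA_{ī₂} ≠ max_j VPA_j, then R̂^PPA > R̂^PPC, i.e., p_{i₁}·VPA_(2) > p_{ī₁}·x·γ_{ī₂}·v_{ī₂}. (Proposition 3, part (ii).) -/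
/-!
Bidder `ī₂` is not the VPA winner, so `VPA_(2) ≥ VPA_{ī₂}`, and `VPA_{ī₂}` exceeds
`x·VPC_{ī₂}` by `(1 - x)·q_{ī₂}·v_{ī₂} > 0`, the value of sales made when the ad is noticed
but not clicked. Passing from `p_{ī₁}` to the larger `p_{i₁}` only increases the PPA side.
-/

namespace PPA12

lemma erase_nonempty {n : ℕ} (hn : 2 ≤ n) (i : Fin n) :
    ((Finset.univ : Finset (Fin n)).erase i).Nonempty := by
  apply Finset.card_pos.mp
  rw [Finset.card_erase_of_mem (Finset.mem_univ i), Finset.card_univ, Fintype.card_fin]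
  omega

/-- `bmax hn b i = max_{j ≠ i} b_j`. -/
noncomputable def bmax {n : ℕ} (hn : 2 ≤ n) (b : Fin n → ℝ) (i : Fin n) : ℝ :=
  ((Finset.univ : Finset (Fin n)).erase i).sup' (erase_nonempty hn i) b

/-- Value-per-click: `VPC_i = γ_i·v_i`. -/
def VPC {n : ℕ} (γ v : Fin n → ℝ) (i : Fin n) : ℝ := γ i * v i

/-- Value-per-attention: `VPA_i = [x·γ_i + (1−x)·q_i]·v_i`. -/
def VPA {n : ℕ} (x : ℝ) (γ q v : Fin n → ℝ) (i : Fin n) : ℝ :=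
  (x * γ i + (1 - x) * q i) * v i

lemma le_bmax_of_ne {n : ℕ} (hn : 2 ≤ n) (b : Fin n → ℝ) {i j : Fin n} (hji : j ≠ i) :
    b j ≤ bmax hn b i :=
  Finset.le_sup' b (Finset.mem_erase.mpr ⟨hji, Finset.mem_univ j⟩)

lemma mul_VPC_lt_VPA {n : ℕ} {x : ℝ} (hx : x < 1) (γ : Fin n → ℝ) {q v : Fin n → ℝ} {i : Fin n}
    (hq : 0 < q i) (hv : 0 < v i) : x * VPC γ v i < VPA x γ q v i := by
  have hgap : 0 < (1 - x) * q i * v i := mul_pos (mul_pos (sub_pos.mpr hx) hq) hv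
  rw [VPC, VPA]
  linarith

theorem framed_ppa_vs_ppc_general (n : ℕ) (hn : 2 ≤ n)
    (p : Fin n → ℝ)
    (x : ℝ) (hx : 0 < x ∧ x ≤ 1)
    (γ q v : Fin n → ℝ)
    (hγ : ∀ i, 0 ≤ γ i ∧ γ i ≤ 1)
    (i1 ibar1 ibar2 : Fin n)
    (hpp : p ibar1 ≤ p i1) (hpbar : 0 < p ibar1)
    (hx1 : x < 1) (hq2 : 0 < q ibar2) (hv2 : 0 < v ibar2)
    (hne : VPA x γ q v ibar2 ≠ VPA x γ q v i1) :
    p i1 * bmax hn (VPA x γ q v) i1 > p ibar1 * x * (γ ibar2 * v ibar2) := by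
  have hgap : x * VPC γ v ibar2 < VPA x γ q v ibar2 := mul_VPC_lt_VPA hx1 γ hq2 hv2
  have hclick : 0 ≤ x * VPC γ v ibar2 :=
    mul_nonneg hx.1.le (mul_nonneg (hγ ibar2).1 hv2.le)
  have hpi1 : 0 < p i1 := hpbar.trans_le hpp
  have hsecond : VPA x γ q v ibar2 ≤ bmax hn (VPA x γ q v) i1 :=
    le_bmax_of_ne hn _ fun h => hne (congrArg _ h)
  calc p ibar1 * x * (γ ibar2 * v ibar2) = p ibar1 * (x * VPC γ v ibar2) := by
        rw [VPC, mul_assoc]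
    _ < p i1 * VPA x γ q v ibar2 := mul_lt_mul' hpp hgap hclick hpi1
    _ ≤ p i1 * bmax hn (VPA x γ q v) i1 :=
        mul_le_mul_of_nonneg_left hsecond hpi1.le

/-- **Proposition 3(ii).** Let `i₁` be the unique bidder attaining `max_j VPA_j`
(with second-highest value `VPA_(2) = max_{j≠i₁} VPA_j`), `ī₁` the unique bidder
attaining `max_j VPC_j`, and `ī₂ ≠ ī₁` a bidder attaining `max_{j≠ī₁} VPC_j`, so
that `R̂^PPA = p_{i₁}·VPA_(2)` and `R̂^PPC = p_{ī₁}·x·VPC_{ī₂}`. If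
`p_{i₁} ≥ p_{ī₁} > 0`, `x < 1`, `q_{ī₂} > 0`, `v_{ī₂} > 0`, and
`VPA_{ī₂} ≠ max_j VPA_j`, then `R̂^PPA > R̂^PPC`, i.e.
`p_{i₁}·VPA_(2) > p_{ī₁}·x·γ_{ī₂}·v_{ī₂}`. -/
theorem framed_ppa_vs_ppc (n : ℕ) (hn : 2 ≤ n)
    (p : Fin n → ℝ) (hp : ∀ i, 0 ≤ p i ∧ p i ≤ 1)
    (x : ℝ) (hx : 0 < x ∧ x ≤ 1)
    (γ q v : Fin n → ℝ)
    (hγ : ∀ i, 0 ≤ γ i ∧ γ i ≤ 1) (hq : ∀ i, 0 ≤ q i ∧ q i ≤ 1)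
    (hv : ∀ i, 0 ≤ v i)
    (i1 ibar1 ibar2 : Fin n)
    (hi1max : ∀ j, VPA x γ q v j ≤ VPA x γ q v i1)
    (hi1uniq : ∀ j, j ≠ i1 → VPA x γ q v j < VPA x γ q v i1)
    (hibar1max : ∀ j, VPC γ v j ≤ VPC γ v ibar1)
    (hibar1uniq : ∀ j, j ≠ ibar1 → VPC γ v j < VPC γ v ibar1)
    (hibar2ne : ibar2 ≠ ibar1)
    (hibar2max : ∀ j, j ≠ ibar1 → VPC γ v j ≤ VPC γ v ibar2)
    (hpp : p ibar1 ≤ p i1) (hpbar : 0 < p ibar1)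
    (hx1 : x < 1) (hq2 : 0 < q ibar2) (hv2 : 0 < v ibar2)
    (hne : VPA x γ q v ibar2 ≠ VPA x γ q v i1) :
    p i1 * bmax hn (VPA x γ q v) i1 > p ibar1 * x * (γ ibar2 * v ibar2) :=
  framed_ppa_vs_ppc_general n hn p x hx γ q v hγ i1 ibar1 ibar2 hpp hpbar hx1 hq2 hv2 hne

end PPA12
end
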